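/- arXiv:2208.14570 — 2 statements merged into one kernel-verified Lean document; each statement's English description precedes it below -/
import Mathlib

section
/- Fix α ∈ (1/2,1) and ε ∈ (0,1/2). Let m = ((1−ε)α² + ε(1−α)²)/(α² + (1−α)²) and define g(h) = ε·Σ_{i=1}^{h−1}(1−2ε)^i + (1−2ε)^h·m for positive integers h. If (1−2ε)^{h+1} ≤ 1 − 2α(1−α), then g(h) ≤ α. -/
/-- With m = ((1−ε)α² + ε(1−α)²)/(α² + (1−α)²) and
g(h) = ε·Σ_{i=1}^{h−1}(1−2ε)^i + (1−2ε)^h·m: if (1−2ε)^{h+1} ≤ 1 − 2α(1−α)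
then g(h) ≤ α, for any positive integer h. -/
theorem cascade_exit_bound (α ε : ℝ)
    (hα : α ∈ Set.Ioo (1 / 2 : ℝ) 1) (hε : ε ∈ Set.Ioo (0 : ℝ) (1 / 2))
    (h : ℕ) (hh : 0 < h)
    (hyp : (1 - 2 * ε) ^ (h + 1) ≤ 1 - 2 * α * (1 - α)) :
    ε * (∑ i ∈ Finset.Icc 1 (h - 1), (1 - 2 * ε) ^ i)
      + (1 - 2 * ε) ^ h * (((1 - ε) * α ^ 2 + ε * (1 - α) ^ 2) / (α ^ 2 + (1 - α) ^ 2))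
      ≤ α := by
  obtain ⟨hα1, hα2⟩ := hα
  obtain ⟨hε1, hε2⟩ := hε
  set q : ℝ := 1 - 2 * ε with hq
  have hq0 : 0 < q := by simp [hq]; linarith
  have hq1 : q ≠ 1 := by simp [hq]; linarith
  have hD : (0:ℝ) < α ^ 2 + (1 - α) ^ 2 := by positivity
  have hqpow : 0 < q ^ h := pow_pos hq0 h
  -- rewrite the sum
  have hIcc : Finset.Icc 1 (h - 1) = Finset.range h \ {0} := by
    ext i
    simp [Finset.mem_Icc, Finset.mem_range, Finset.mem_sdiff, Nat.lt_iff_le_pred hh,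
      Nat.one_le_iff_ne_zero]
    omega
  have hsum : (∑ i ∈ Finset.Icc 1 (h - 1), q ^ i) = (q ^ h - 1) / (q - 1) - 1 := by
    rw [hIcc, Finset.sum_sdiff_eq_sub (by simp [Finset.singleton_subset_iff, hh])]
    simp [geom_sum_eq hq1]
  rw [hsum]
  -- key inequality
  have hkey : q ^ (h + 1) * (2 * α - 1) ≤ (2 * α - q) * (α ^ 2 + (1 - α) ^ 2) := by
    have h1 : q ^ (h + 1) ≤ α ^ 2 + (1 - α) ^ 2 := by nlinarith [hyp]
    have h2 : 2 * α - 1 ≥ 0 := by linarith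
    have h3 : q ≤ 1 := by simp [hq]; linarith
    nlinarith [mul_le_mul_of_nonneg_right h1 h2]
  have hq1' : q - 1 = -(2 * ε) := by rw [hq]; ring
  rw [hq1']
  have e1 : ε * ((q ^ h - 1) / -(2 * ε) - 1) = (1 - q ^ h) / 2 - ε := by
    field_simp
    ring
  rw [e1]
  have hdiv : q ^ h * (((1 - ε) * α ^ 2 + ε * (1 - α) ^ 2) / (α ^ 2 + (1 - α) ^ 2))
      * (α ^ 2 + (1 - α) ^ 2) = q ^ h * ((1 - ε) * α ^ 2 + ε * (1 - α) ^ 2) := by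
    field_simp
  have hp : q ^ (h + 1) = q * q ^ h := by ring
  simp only [hq] at hkey hdiv hp hqpow ⊢
  nlinarith [hkey, hdiv, hD, hqpow, hp]
end

section
/- For all α ∈ (1/2,1) and ε ∈ (0, α(1−α)), the quantity M(α,ε) := 1 + K(α,ε)/(2α(1−α)), where K(α,ε) = log(1−2α(1−α))/log(1−2ε), satisfies M(α,ε) < 1/ε. -/
lemma log_one_sub_ge (x : ℝ) (h0 : 0 ≤ x) (h2 : x ≤ 1/2) :
    x^2 - 2*x ≤ Real.log (1 - x) := by
  have hx1 : (0:ℝ) < 1 - x := by linarith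
  rw [Real.le_log_iff_exp_le hx1]
  set t : ℝ := 2*x - x^2 with ht_def
  have ht : 0 ≤ t := by nlinarith
  have h1 : 1 + t + t^2/2 ≤ Real.exp t := Real.quadratic_le_exp_of_nonneg ht
  have hpos : (0:ℝ) < 1 + t + t^2/2 := by nlinarith
  have hkey : 1 ≤ (1 - x) * (1 + t + t^2/2) := by
    rw [ht_def]
    nlinarith [sq_nonneg x, sq_nonneg (x - 1/2), sq_nonneg (x^2),
      mul_nonneg h0 (sq_nonneg x), mul_nonneg (mul_nonneg h0 h0) (sq_nonneg x)]
  have hinv : Real.exp (x^2 - 2*x) = (Real.exp t)⁻¹ := by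
    rw [← Real.exp_neg, ht_def]; ring_nf
  rw [hinv]
  calc (Real.exp t)⁻¹ ≤ (1 + t + t^2/2)⁻¹ := by
        apply inv_anti₀ hpos h1
    _ ≤ 1 - x := by
        rw [inv_le_iff_one_le_mul₀ hpos]
        linarith [hkey]

/-- For all α ∈ (1/2,1) and ε ∈ (0, α(1−α)),
M(α,ε) = 1 + K(α,ε)/(2α(1−α)) < 1/ε, where
K(α,ε) = log(1−2α(1−α))/log(1−2ε). -/
theorem M_lt_inv_eps (α ε : ℝ)
    (hα : α ∈ Set.Ioo (1 / 2 : ℝ) 1) (hε : ε ∈ Set.Ioo (0 : ℝ) (α * (1 - α))) :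
    1 + (Real.log (1 - 2 * α * (1 - α)) / Real.log (1 - 2 * ε))
        / (2 * α * (1 - α)) < 1 / ε := by
  obtain ⟨ha1, ha2⟩ := hα
  obtain ⟨he1, he2⟩ := hε
  have hβ0 : 0 < α * (1 - α) := mul_pos (by linarith) (by linarith)
  have hβ4 : α * (1 - α) < 1/4 := by nlinarith [sq_nonneg (2*α - 1)]
  set β : ℝ := α * (1 - α) with hβ
  -- bound on L1
  have hL1 : -(Real.log (1 - 2 * α * (1 - α))) ≤ 4*β*(1-β) := by
    have h := log_one_sub_ge (2*β) (by linarith) (by linarith)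
    have heq : (1:ℝ) - 2*β = 1 - 2 * α * (1 - α) := by rw [hβ]; ring
    rw [heq] at h
    nlinarith
  -- bound on L2
  have hL2 : 2*ε < -(Real.log (1 - 2*ε)) := by
    have h0 : (0:ℝ) < 1 - 2*ε := by nlinarith
    have h1 : (1:ℝ) - 2*ε ≠ 1 := by intro h; nlinarith
    have := Real.log_lt_sub_one_of_pos h0 h1
    linarith
  have hL2pos : 0 < -(Real.log (1 - 2*ε)) := by linarith
  have hL1nn : 0 ≤ -(Real.log (1 - 2 * α * (1 - α))) := by
    have := Real.log_nonpos (by nlinarith) (by nlinarith : 1 - 2 * α * (1 - α) ≤ 1)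
    linarith
  -- key : L1/L2 < 2β(1-ε)/ε
  have hK : Real.log (1 - 2 * α * (1 - α)) / Real.log (1 - 2 * ε)
      < 2*β*(1-ε)/ε := by
    have hdiv : Real.log (1 - 2 * α * (1 - α)) / Real.log (1 - 2 * ε)
        = (-(Real.log (1 - 2 * α * (1 - α)))) / (-(Real.log (1 - 2*ε))) := by
      rw [neg_div_neg_eq]
    rw [hdiv]
    calc (-(Real.log (1 - 2 * α * (1 - α)))) / (-(Real.log (1 - 2*ε)))
        ≤ (-(Real.log (1 - 2 * α * (1 - α)))) / (2*ε) :=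
          div_le_div_of_nonneg_left hL1nn (by linarith) hL2.le
      _ ≤ (4*β*(1-β)) / (2*ε) := by
          rw [div_le_div_iff₀ (by linarith) (by linarith : (0:ℝ) < 2*ε)]
          nlinarith [hL1, he1]
      _ < 2*β*(1-ε)/ε := by
          rw [div_lt_div_iff₀ (by linarith) he1]
          nlinarith [mul_pos (mul_pos hβ0 he1) (sub_pos.mpr he2)]
  -- finish
  have h2β : (0:ℝ) < 2*β := by linarith
  have hgoal2 : Real.log (1 - 2 * α * (1 - α)) / Real.log (1 - 2 * ε) / (2 * α * (1 - α))
      < (1-ε)/ε := by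
    have heq : (2 : ℝ) * α * (1 - α) = 2*β := by rw [hβ]; ring
    rw [heq] at hK ⊢
    rw [div_lt_div_iff₀ h2β he1]
    have h := (lt_div_iff₀ he1).mp hK
    nlinarith [h]
  have : 1 + (1-ε)/ε = 1/ε := by field_simp; ring
  linarith [hgoal2]
end
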